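/- Let X, Y be n×k real matrices with orthonormal columns (XᵀX = YᵀY = I_k) such that I_k + XᵀY is invertible. Define Δ = 2(Y − X)(I_k + XᵀY)⁻¹. Then (I − (1/2)ΔXᵀ)⁻¹ (I + (1/2)ΔXᵀ) X = Y, i.e. Δ is the exact preimage of Y under the Cayley retraction at X on the Stiefel manifold. -/
import Mathlib


open Matrix

/-- For `X, Y ∈ St(n,k)` with `I + XᵀY` invertible and
`Δ = 2(Y − X)(I + XᵀY)⁻¹`, the Cayley retraction at `X` applied to `Δ`
recovers `Y`: `(I − ΔXᵀ/2)⁻¹ (I + ΔXᵀ/2) X = Y`. -/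
theorem cayley_retraction_preimage {n k : ℕ}
    (X Y : Matrix (Fin n) (Fin k) ℝ)
    (hX : Xᵀ * X = 1) (hY : Yᵀ * Y = 1)
    (hinv : IsUnit (1 + Xᵀ * Y))
    (Δ : Matrix (Fin n) (Fin k) ℝ)
    (hΔ : Δ = (2 : ℝ) • ((Y - X) * (1 + Xᵀ * Y)⁻¹)) :
    IsUnit (1 - (1/2 : ℝ) • (Δ * Xᵀ)) ∧
    (1 - (1/2 : ℝ) • (Δ * Xᵀ))⁻¹ * (1 + (1/2 : ℝ) • (Δ * Xᵀ)) * X = Y := by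
  have hdet : IsUnit (1 + Xᵀ * Y).det := (Matrix.isUnit_iff_isUnit_det _).mp hinv
  set S := (1 + Xᵀ * Y)⁻¹ with hSdef
  have h1 : S * (1 + Xᵀ * Y) = 1 := Matrix.nonsing_inv_mul _ hdet
  set M := Y - X with hM
  have hA : (1/2 : ℝ) • (Δ * Xᵀ) = M * S * Xᵀ := by
    rw [hΔ, Matrix.smul_mul, smul_smul]
    norm_num
  have hXM : Xᵀ * M = Xᵀ * Y - 1 := by
    rw [hM, Matrix.mul_sub, hX]
  have hSG : S * (Xᵀ * Y) = 1 - S := by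
    have h1' := h1
    rw [mul_add, mul_one] at h1'
    exact eq_sub_of_add_eq' h1'
  have hkey : S * (Xᵀ * Y - 1) = 1 - (S + S) := by
    rw [mul_sub, mul_one, hSG]
    abel
  set A := M * S * Xᵀ with hAdef
  set C : Matrix (Fin n) (Fin n) ℝ := 1 + (1/2 : ℝ) • (M * Xᵀ) with hC
  have hAMX : A * (M * Xᵀ) = M * Xᵀ - (A + A) := by
    have e1 : A * (M * Xᵀ) = M * (S * (Xᵀ * M) * Xᵀ) := by
      simp only [hAdef, Matrix.mul_assoc]
    rw [e1, hXM, hkey, hAdef]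
    simp only [Matrix.sub_mul, Matrix.add_mul, Matrix.one_mul, Matrix.mul_sub,
      Matrix.mul_add, Matrix.mul_assoc]
  have hEC : (1 - A) * C = 1 := by
    rw [hC, mul_add, mul_one, sub_mul, one_mul, mul_smul_comm, hAMX, smul_sub,
      smul_add]
    have h2 : (1/2 : ℝ) • A + (1/2 : ℝ) • A = A := by module
    rw [h2]
    abel
  have hCE : C * (1 - A) = 1 := mul_eq_one_comm.mp hEC
  have hEX : (1 + A) * X = (1 - A) * Y := by
    have hAX : A * X = M * S := by
      rw [hAdef, Matrix.mul_assoc, Matrix.mul_assoc, hX, Matrix.mul_one]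
    have hAY : A * Y = M * (S * (Xᵀ * Y)) := by
      simp only [hAdef, Matrix.mul_assoc]
    rw [Matrix.add_mul, Matrix.sub_mul, Matrix.one_mul, Matrix.one_mul, hAX,
      hAY, hSG, Matrix.mul_sub, Matrix.mul_one, hM]
    abel
  have hEinv : (1 - A)⁻¹ = C := Matrix.inv_eq_right_inv hEC
  rw [hA]
  refine ⟨⟨⟨1 - A, C, hEC, hCE⟩, rfl⟩, ?_⟩
  rw [hEinv, Matrix.mul_assoc, hEX, ← Matrix.mul_assoc, hCE, Matrix.one_mul]
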